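/- Fix l ≥ 2. For M > l-2 with N ≡ M mod 2, the weighted number of lattice paths from (0,0) to (M,N), with a left wall at x=0 and a type-1 filter at x=l-1 (the step (l-1,y)→(l-2,y+1) is forbidden and the step (l,y)→(l-1,y+1) has weight 2), equals F(M,N) + Σ_{k=1}^{⌊(N-l+1)/(2l)⌋} F(M+2kl, N), where F(m,n) = binom(n,(n-m)/2) - binom(n,(n-m)/2 - 1). -/

import Mathlib

open Finset

/-- The x-coordinate after the first `k` steps of a path encoded by `s : Fin N → Bool`
(`true` = step `(x,y) → (x+1,y+1)`, `false` = step `(x,y) → (x-1,y+1)`), starting at `x = 0`. -/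
def pathPos {N : ℕ} (s : Fin N → Bool) (k : ℕ) : ℤ :=
  ∑ i ∈ Finset.univ.filter (fun i : Fin N => (i : ℕ) < k), (if s i then (1 : ℤ) else -1)

/-- Binomial coefficient `binom n k` with integer lower argument, `0` out of range. -/
def ibinom (n : ℕ) (k : ℤ) : ℤ :=
  if 0 ≤ k then (n.choose k.toNat : ℤ) else 0


/-- The weight of a path: the product over its steps of the weight of each step. -/
def pathWeight {N : ℕ} (w : ℤ → Bool → ℤ) (s : Fin N → Bool) : ℤ :=
  ∏ i : Fin N, w (pathPos s i.val) (s i)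

/-- `F m n = binom n ((n-m)/2) - binom n ((n-m)/2 - 1)`. -/
def F (m : ℤ) (n : ℕ) : ℤ :=
  ibinom n (((n : ℤ) - m) / 2) - ibinom n (((n : ℤ) - m) / 2 - 1)

/-!
Weighted paths obey the transfer recurrence `G(n+1, x) = G(n, x-1) + c(x+1) G(n, x+1)`, where
`c(y)` is the weight of the down-step from `y`: `0` at `y = 0` and `y = l-1`, `2` at `y = l`,
`1` otherwise. So it suffices to exhibit a solution with the right initial values.

Let `P(n, y)` (`rayCount`) count the free paths ending in `y + 2lℕ`, and let
`Θ(y) = P(y) + P(2l - y)` (`foldCount`). Both satisfy Pascal's rule, and `P(y) - P(y + 2l)` is the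
free count at `y`, which makes `Θ` even. Hence `Θ(x) - Θ(x+2)` solves the recurrence on
`0 ≤ x ≤ l-2`, vanishing at `x = -1` (the wall) and at `x = l-1` (the forbidden step), while
`P(x) - P(x+2)` solves it for `x ≥ l-1`; the two glue at `x = l-1` with the factor `2` because
`Θ(l) = 2 P(l)`. Expanding `P(M) - P(M+2)` into free counts gives the sum of the ballot numbers
`F(M + 2kl, N)`.
-/

lemma ibinom_of_neg {n : ℕ} {k : ℤ} (h : k < 0) : ibinom n k = 0 := by
  simp [ibinom, not_le.2 h]

lemma ibinom_of_lt {n : ℕ} {k : ℤ} (h : (n : ℤ) < k) : ibinom n k = 0 := by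
  rw [ibinom, if_pos (by omega), Nat.choose_eq_zero_of_lt (by omega), Nat.cast_zero]

lemma ibinom_succ (n : ℕ) (k : ℤ) : ibinom (n + 1) k = ibinom n k + ibinom n (k - 1) := by
  rcases lt_trichotomy k 0 with hk | rfl | hk
  · rw [ibinom_of_neg hk, ibinom_of_neg hk, ibinom_of_neg (by omega), add_zero]
  · simp [ibinom]
  · have hk' : k.toNat = (k - 1).toNat + 1 := by omega
    simp only [ibinom, if_pos hk.le, if_pos (by omega : 0 ≤ k - 1), hk', Nat.choose_succ_succ',
      Nat.cast_add]
    ring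

def freeCount : ℕ → ℤ → ℤ
  | 0, y => if y = 0 then 1 else 0
  | n + 1, y => freeCount n (y - 1) + freeCount n (y + 1)

lemma freeCount_neg (n : ℕ) (y : ℤ) : freeCount n (-y) = freeCount n y := by
  induction n generalizing y with
  | zero => simp [freeCount]
  | succ n ih =>
    rw [freeCount, freeCount, show -y - 1 = -(y + 1) by ring, show -y + 1 = -(y - 1) by ring,
      ih, ih, add_comm]

lemma freeCount_eq_ibinom (n : ℕ) (y : ℤ) :
    freeCount n y = if 2 ∣ (n : ℤ) - y then ibinom n (((n : ℤ) - y) / 2) else 0 := by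
  induction n generalizing y with
  | zero =>
    by_cases hy : y = 0
    · simp [freeCount, hy, ibinom]
    rw [freeCount, if_neg hy]
    split_ifs with h
    · rcases lt_or_gt_of_ne hy with hy | hy
      · rw [ibinom_of_lt (by omega)]
      · rw [ibinom_of_neg (by omega)]
    · rfl
  | succ n ih =>
    rw [freeCount, ih, ih]
    push_cast
    by_cases hp : 2 ∣ (n : ℤ) + 1 - y
    · rw [if_pos hp, if_pos (by omega), if_pos (by omega), ibinom_succ]
      congr 2 <;> omega
    · rw [if_neg hp, if_neg (by omega), if_neg (by omega), add_zero]

lemma F_eq_freeCount_sub {m : ℤ} {n : ℕ} (h : 2 ∣ (n : ℤ) - m) :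
    F m n = freeCount n m - freeCount n (m + 2) := by
  rw [F, freeCount_eq_ibinom, freeCount_eq_ibinom, if_pos h, if_pos (by omega)]
  congr 2
  omega

/-- The number of free paths of length `n` from `0` ending in `y + 2lℕ`, i.e.
`∑ k : ℕ, freeCount n (y + 2 * k * l)`. -/
def rayCount (l : ℕ) : ℕ → ℤ → ℤ
  | 0, y => if y ≤ 0 ∧ 2 * (l : ℤ) ∣ y then 1 else 0
  | n + 1, y => rayCount l n (y - 1) + rayCount l n (y + 1)

lemma rayCount_zero_zero (l : ℕ) : rayCount l 0 0 = 1 := by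
  simp [rayCount]

lemma rayCount_of_lt (l : ℕ) {n : ℕ} {y : ℤ} (h : (n : ℤ) < y) : rayCount l n y = 0 := by
  induction n generalizing y with
  | zero => rw [rayCount, if_neg (by omega)]
  | succ n ih => rw [rayCount, ih (by omega), ih (by omega), add_zero]

lemma rayCount_eq_freeCount_add {l : ℕ} (hl : 0 < l) (n : ℕ) (y : ℤ) :
    rayCount l n y = freeCount n y + rayCount l n (y + 2 * l) := by
  induction n generalizing y with
  | zero =>
    have hdvd : 2 * (l : ℤ) ∣ y + 2 * l ↔ 2 * (l : ℤ) ∣ y := dvd_add_self_right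
    simp only [rayCount, freeCount, hdvd]
    by_cases hy : y = 0
    · simp [hy, hl]
    by_cases h : y ≤ 0 ∧ 2 * (l : ℤ) ∣ y
    · obtain ⟨hy0, c, rfl⟩ := h
      have hc : c ≤ -1 := by
        by_contra hc
        exact hy (by nlinarith)
      simp [hy, hy0, show 2 * (l : ℤ) * c + 2 * l ≤ 0 by nlinarith]
    · simp only [if_neg h, if_neg hy]
      split_ifs <;> omega
  | succ n ih =>
    rw [rayCount, rayCount, freeCount, ih (y - 1), ih (y + 1)]
    ring_nf

lemma rayCount_eq_sum_add {l : ℕ} (hl : 0 < l) (n K : ℕ) (y : ℤ) :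
    rayCount l n y =
      ∑ k ∈ range K, freeCount n (y + 2 * k * l) + rayCount l n (y + 2 * K * l) := by
  induction K with
  | zero => simp
  | succ K ih =>
    rw [ih, sum_range_succ, rayCount_eq_freeCount_add hl n (y + 2 * K * l), Nat.cast_succ,
      show y + 2 * K * l + 2 * l = y + 2 * (K + 1) * l by ring, add_assoc]

def foldCount (l n : ℕ) (y : ℤ) : ℤ := rayCount l n y + rayCount l n (2 * l - y)

lemma foldCount_succ (l n : ℕ) (y : ℤ) :
    foldCount l (n + 1) y = foldCount l n (y - 1) + foldCount l n (y + 1) := by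
  simp only [foldCount, rayCount]
  ring_nf

lemma foldCount_neg {l : ℕ} (hl : 0 < l) (n : ℕ) (y : ℤ) :
    foldCount l n (-y) = foldCount l n y := by
  rw [foldCount, foldCount, rayCount_eq_freeCount_add hl n (-y), rayCount_eq_freeCount_add hl n y,
    freeCount_neg]
  ring_nf

def lowerCount (l n : ℕ) (x : ℤ) : ℤ := foldCount l n x - foldCount l n (x + 2)

def upperCount (l n : ℕ) (x : ℤ) : ℤ := rayCount l n x - rayCount l n (x + 2)

lemma lowerCount_succ (l n : ℕ) (x : ℤ) :
    lowerCount l (n + 1) x = lowerCount l n (x - 1) + lowerCount l n (x + 1) := by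
  simp only [lowerCount, foldCount_succ]
  ring_nf

lemma upperCount_succ (l n : ℕ) (x : ℤ) :
    upperCount l (n + 1) x = upperCount l n (x - 1) + upperCount l n (x + 1) := by
  simp only [upperCount, rayCount]
  ring_nf

lemma lowerCount_neg_one {l : ℕ} (hl : 0 < l) (n : ℕ) : lowerCount l n (-1) = 0 := by
  rw [lowerCount, foldCount_neg hl]
  norm_num

lemma lowerCount_sub_one (l n : ℕ) : lowerCount l n (l - 1) = 0 := by
  simp only [lowerCount, foldCount]
  ring_nf

lemma upperCount_succ_sub_one (l n : ℕ) :
    upperCount l (n + 1) (l - 1) = lowerCount l n (l - 2) + 2 * upperCount l n l := by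
  simp only [upperCount, lowerCount, foldCount, rayCount]
  ring_nf

def filterCount (l n : ℕ) (x : ℤ) : ℤ :=
  if x < 0 then 0 else if x ≤ l - 2 then lowerCount l n x else upperCount l n x

/-- The weight of the step `(y, _) → (y - 1, _ + 1)`. -/
def downWeight (l : ℕ) (y : ℤ) : ℤ :=
  if y = 0 ∨ y = l - 1 then 0 else if y = l then 2 else 1

lemma filterCount_of_neg (l n : ℕ) {x : ℤ} (hx : x < 0) : filterCount l n x = 0 :=
  if_pos hx

lemma filterCount_eq_lowerCount {l : ℕ} (hl : 0 < l) (n : ℕ) {x : ℤ} (h₁ : -1 ≤ x)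
    (h₂ : x ≤ l - 2) : filterCount l n x = lowerCount l n x := by
  obtain rfl | hx := eq_or_lt_of_le h₁
  · rw [filterCount_of_neg l n (by norm_num), lowerCount_neg_one hl]
  · rw [filterCount, if_neg (by omega), if_pos h₂]

lemma filterCount_eq_upperCount {l : ℕ} (hl : 0 < l) (n : ℕ) {x : ℤ} (hx : l - 1 ≤ x) :
    filterCount l n x = upperCount l n x := by
  rw [filterCount, if_neg (by omega), if_neg (by omega)]

lemma downWeight_mul_filterCount {l : ℕ} (hl : 0 < l) (n : ℕ) {y : ℤ} (h₁ : 1 ≤ y)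
    (h₂ : y ≤ l - 1) : downWeight l y * filterCount l n y = lowerCount l n y := by
  obtain rfl | hy := eq_or_lt_of_le h₂
  · rw [downWeight, if_pos (Or.inr rfl), zero_mul, lowerCount_sub_one]
  · rw [downWeight, if_neg (by omega), if_neg (by omega), one_mul,
      filterCount_eq_lowerCount hl n (by omega) (by omega)]

lemma filterCount_zero (l : ℕ) (x : ℤ) : filterCount l 0 x = if x = 0 then 1 else 0 := by
  rcases lt_trichotomy x 0 with hx | rfl | hx
  · rw [filterCount_of_neg l 0 hx, if_neg hx.ne]
  · rw [if_pos rfl, filterCount, if_neg (lt_irrefl 0)]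
    split_ifs
    · rw [lowerCount, foldCount, foldCount, rayCount_zero_zero, rayCount_of_lt l (by omega),
        rayCount_of_lt l (by omega), rayCount_of_lt l (by omega)]
      norm_num
    · rw [upperCount, rayCount_zero_zero, rayCount_of_lt l (by omega), sub_zero]
  · rw [if_neg hx.ne', filterCount, if_neg hx.not_gt]
    split_ifs
    · rw [lowerCount, foldCount, foldCount, rayCount_of_lt l (by omega : ((0 : ℕ) : ℤ) < x),
        rayCount_of_lt l (by omega), rayCount_of_lt l (by omega), rayCount_of_lt l (by omega),
        sub_self]
    · rw [upperCount, rayCount_of_lt l (by omega : ((0 : ℕ) : ℤ) < x),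
        rayCount_of_lt l (by omega), sub_self]

lemma filterCount_succ {l : ℕ} (hl : 2 ≤ l) (n : ℕ) (x : ℤ) :
    filterCount l (n + 1) x =
      filterCount l n (x - 1) + downWeight l (x + 1) * filterCount l n (x + 1) := by
  obtain hx | rfl | hx | rfl | hx :
      x < -1 ∨ x = -1 ∨ (0 ≤ x ∧ x ≤ l - 2) ∨ x = l - 1 ∨ l ≤ x := by omega
  · rw [filterCount_of_neg _ _ (by omega : x < 0), filterCount_of_neg _ _ (by omega : x - 1 < 0),
      filterCount_of_neg _ _ (by omega : x + 1 < 0), mul_zero, add_zero]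
  · simp [filterCount_of_neg, downWeight]
  · rw [filterCount_eq_lowerCount (by omega) _ (by omega) hx.2, lowerCount_succ,
      filterCount_eq_lowerCount (by omega) _ (by omega) (by omega),
      downWeight_mul_filterCount (by omega) _ (by omega) (by omega)]
  · rw [filterCount_eq_upperCount (by omega) _ le_rfl, upperCount_succ_sub_one,
      filterCount_eq_lowerCount (by omega) _ (by omega) (by omega), sub_add_cancel,
      filterCount_eq_upperCount (by omega) _ (by omega), downWeight, if_neg (by omega), if_pos rfl,
      show (l : ℤ) - 1 - 1 = l - 2 by ring]
  · rw [filterCount_eq_upperCount (by omega) _ (by omega), upperCount_succ,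
      filterCount_eq_upperCount (by omega) _ (by omega),
      filterCount_eq_upperCount (by omega) _ (by omega), downWeight, if_neg (by omega),
      if_neg (by omega), one_mul]

lemma pathPos_eq_sum_ite {N : ℕ} (s : Fin N → Bool) (k : ℕ) :
    pathPos s k = ∑ i : Fin N, if (i : ℕ) < k then (if s i then (1 : ℤ) else -1) else 0 :=
  sum_filter _ _

lemma pathPos_snoc_of_le {N : ℕ} (t : Fin N → Bool) (b : Bool) {k : ℕ} (hk : k ≤ N) :
    pathPos (Fin.snoc t b) k = pathPos t k := by
  rw [pathPos_eq_sum_ite, pathPos_eq_sum_ite, Fin.sum_univ_castSucc]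
  simp only [Fin.snoc_castSucc, Fin.val_castSucc, Fin.val_last]
  rw [if_neg (by omega), add_zero]

lemma pathPos_snoc_succ {N : ℕ} (t : Fin N → Bool) (b : Bool) :
    pathPos (Fin.snoc t b) (N + 1) = pathPos t N + if b then 1 else -1 := by
  rw [pathPos_eq_sum_ite, pathPos_eq_sum_ite, Fin.sum_univ_castSucc]
  simp only [Fin.snoc_castSucc, Fin.val_castSucc, Fin.snoc_last, Fin.val_last, Fin.is_lt,
    Nat.lt_succ_of_lt, if_true, lt_add_one]

lemma pathWeight_snoc {N : ℕ} (w : ℤ → Bool → ℤ) (t : Fin N → Bool) (b : Bool) :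
    pathWeight w (Fin.snoc t b) = pathWeight w t * w (pathPos t N) b := by
  rw [pathWeight, pathWeight, Fin.prod_univ_castSucc]
  simp only [Fin.snoc_castSucc, Fin.val_castSucc, Fin.snoc_last, Fin.val_last,
    pathPos_snoc_of_le t b le_rfl, pathPos_snoc_of_le t b (Fin.is_lt _).le]

def weightedCount (w : ℤ → Bool → ℤ) (N : ℕ) (x : ℤ) : ℤ :=
  ∑ s : Fin N → Bool, if pathPos s N = x then pathWeight w s else 0

lemma weightedCount_zero (w : ℤ → Bool → ℤ) (x : ℤ) :
    weightedCount w 0 x = if x = 0 then 1 else 0 := by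
  simp [weightedCount, pathPos, pathWeight, eq_comm (a := x)]

lemma weightedCount_succ (w : ℤ → Bool → ℤ) (N : ℕ) (x : ℤ) :
    weightedCount w (N + 1) x =
      weightedCount w N (x - 1) * w (x - 1) true + weightedCount w N (x + 1) * w (x + 1) false := by
  rw [weightedCount, ← (Fin.snocEquiv fun _ => Bool).sum_comp, Fintype.sum_prod_type,
    Fintype.sum_bool, weightedCount, weightedCount, sum_mul, sum_mul]
  congr 1 <;> refine sum_congr rfl fun t _ => ?_ <;>
    rw [show (Fin.snocEquiv fun _ => Bool) (_, t) = Fin.snoc t _ from rfl, pathPos_snoc_succ,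
      pathWeight_snoc] <;>
    simp only [Bool.false_eq_true, if_true, if_false] <;>
    split_ifs <;> first | omega | simp only [zero_mul] | (subst x; ring_nf)

def filterWeight (l : ℕ) (y : ℤ) (b : Bool) : ℤ := if b then 1 else downWeight l y

lemma weightedCount_filterWeight {l : ℕ} (hl : 2 ≤ l) (N : ℕ) (x : ℤ) :
    weightedCount (filterWeight l) N x = filterCount l N x := by
  induction N generalizing x with
  | zero => rw [weightedCount_zero, filterCount_zero]
  | succ N ih =>
    rw [weightedCount_succ, ih, ih, filterCount_succ hl, filterWeight, filterWeight, if_pos rfl,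
      if_neg Bool.false_ne_true, mul_one, mul_comm]

-- Forbidden steps get weight `0`, so the filter conditions can be moved into the weight.
lemma pathWeight_filterWeight (l : ℕ) {N : ℕ} (s : Fin N → Bool) :
    pathWeight (filterWeight l) s =
      if (∀ i : Fin N, pathPos s i.val = 0 → s i = true) ∧
          (∀ i : Fin N, pathPos s i.val = (l : ℤ) - 1 → s i = true) then
        pathWeight (fun x b => if x = (l : ℤ) ∧ b = false then 2 else 1) s
      else 0 := by
  split_ifs with h
  · refine prod_congr rfl fun i _ => ?_
    cases hi : s i
    · have h₀ : pathPos s i ≠ 0 := fun h' => by simpa [hi] using h.1 i h'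
      have h₁ : pathPos s i ≠ l - 1 := fun h' => by simpa [hi] using h.2 i h'
      simp [filterWeight, downWeight, h₀, h₁]
    · simp [filterWeight]
  · simp only [not_and_or, not_forall] at h
    obtain ⟨i, hpos, hi⟩ | ⟨i, hpos, hi⟩ := h <;>
      exact prod_eq_zero (mem_univ i) (by simp [filterWeight, downWeight, hpos, hi])

lemma finsum_filteredPaths_eq_weightedCount (l N : ℕ) (x : ℤ) :
    (∑ᶠ s ∈ {s : Fin N → Bool | pathPos s N = x ∧
        (∀ i : Fin N, pathPos s i.val = 0 → s i = true) ∧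
        (∀ i : Fin N, pathPos s i.val = (l : ℤ) - 1 → s i = true)},
      pathWeight (fun x b => if x = (l : ℤ) ∧ b = false then 2 else 1) s) =
      weightedCount (filterWeight l) N x := by
  classical
  rw [finsum_mem_eq_toFinset_sum, Set.toFinset_ofPred, sum_filter, weightedCount]
  exact sum_congr rfl fun s _ => by rw [ite_and, pathWeight_filterWeight]

lemma upperCount_eq_sum_F {l : ℕ} (hl : 0 < l) {n : ℕ} {y : ℤ} (K : ℕ)
    (hK : (n : ℤ) < y + 2 * K * l) (hy : 2 ∣ (n : ℤ) - y) :
    upperCount l n y = ∑ k ∈ range K, F (y + 2 * k * l) n := by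
  rw [upperCount, rayCount_eq_sum_add hl n K y, rayCount_eq_sum_add hl n K (y + 2),
    rayCount_of_lt l hK, rayCount_of_lt l (by omega), add_zero, add_zero, ← sum_sub_distrib]
  refine sum_congr rfl fun k _ => ?_
  have hk : 2 ∣ (n : ℤ) - (y + 2 * k * l) := by
    rw [show (n : ℤ) - (y + 2 * k * l) = n - y - 2 * (k * l) by ring]
    exact dvd_sub hy (dvd_mul_right 2 _)
  rw [F_eq_freeCount_sub hk, add_right_comm]

lemma sum_Icc_one_eq_sum_range_toNat {M : Type*} [AddCommMonoid M] (g : ℤ → M) (K : ℤ) :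
    ∑ k ∈ Icc 1 K, g k = ∑ k ∈ range K.toNat, g (k + 1) := by
  refine sum_nbij' (fun k => (k - 1).toNat) (fun k => k + 1) ?_ ?_ ?_ ?_ ?_ <;>
    intro k hk <;> simp_all <;> first | omega | (congr 1; omega)

/-- For `l ≥ 2` and `M > l-2`, the weighted number of lattice paths from `(0,0)` to `(M,N)` with
a left wall at `x = 0` and a type-1 filter at `x = l-1` (step `(l-1,y)→(l-2,y+1)` forbidden,
step `(l,y)→(l-1,y+1)` of weight 2) equals `F M N + Σ_{k=1}^{⌊(N-l+1)/(2l)⌋} F (M+2kl) N`. -/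
theorem wall_filter_right_weighted_count (l M N : ℕ) (hl : 2 ≤ l) (hM : l - 2 < M)
    (h2 : N % 2 = M % 2) :
    (∑ᶠ s ∈ {s : Fin N → Bool |
        pathPos s N = M ∧
        (∀ i : Fin N, pathPos s i.val = 0 → s i = true) ∧
        (∀ i : Fin N, pathPos s i.val = (l : ℤ) - 1 → s i = true)},
      pathWeight (fun x b => if x = (l : ℤ) ∧ b = false then 2 else 1) s) =
      F M N + ∑ k ∈ Finset.Icc (1 : ℤ) (Int.fdiv ((N : ℤ) - l + 1) (2 * l)),
        F ((M : ℤ) + 2 * k * l) N := by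
  set K := Int.fdiv ((N : ℤ) - l + 1) (2 * l) with hKdef
  have hK : (N : ℤ) < M + 2 * ((K.toNat + 1 : ℕ) : ℤ) * l := by
    have hfloor : (N : ℤ) - l + 1 < (K + 1) * (2 * l) := by
      rw [hKdef, Int.fdiv_eq_ediv_of_nonneg _ (by positivity)]
      exact Int.lt_ediv_add_one_mul_self _ (by omega)
    have hK' := Int.self_le_toNat K
    have hMl : (l : ℤ) - 1 ≤ M := by omega
    push_cast
    nlinarith
  rw [finsum_filteredPaths_eq_weightedCount, weightedCount_filterWeight hl,
    filterCount_eq_upperCount (by omega) _ (by omega),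
    upperCount_eq_sum_F (by omega) _ hK (by omega), sum_range_succ',
    sum_Icc_one_eq_sum_range_toNat]
  simp only [Nat.cast_zero, mul_zero, zero_mul, add_zero, Nat.cast_succ, add_comm]
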